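/- For any X in SO(3), the norm of ψ(X) satisfies ‖ψ(X)‖² = 4|X|_I²(1 - |X|_I²), where |X|_I² = tr(I - X)/4 and ψ(X) = [(X - Xᵀ)/2]_⊗. -/
import Mathlib


open Matrix

/-- `ψ(M) = [P_a(M)]_⊗`, the vector of the anti-symmetric part of `M`. -/
noncomputable def psi (M : Matrix (Fin 3) (Fin 3) ℝ) : Fin 3 → ℝ :=
  ![(M 2 1 - M 1 2) / 2, (M 0 2 - M 2 0) / 2, (M 1 0 - M 0 1) / 2]

theorem psi_norm_sq (X : Matrix (Fin 3) (Fin 3) ℝ)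
    (hX : Xᵀ * X = 1) (hdet : X.det = 1) :
    psi X ⬝ᵥ psi X = 4 * ((1 - X).trace / 4) * (1 - (1 - X).trace / 4) := by
  have h := fun i j => congrFun (congrFun hX i) j
  have h00 := h 0 0; have h11 := h 1 1; have h22 := h 2 2
  simp [Matrix.mul_apply, Fin.sum_univ_three, Matrix.one_apply] at h00 h11 h22
  have hadj : X.adjugate = Xᵀ := by
    have h1 : X * X.adjugate = 1 := by rw [Matrix.mul_adjugate, hdet, one_smul]
    calc X.adjugate = (Xᵀ * X) * X.adjugate := by rw [hX, one_mul]
    _ = Xᵀ * (X * X.adjugate) := by rw [Matrix.mul_assoc]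
    _ = Xᵀ := by rw [h1, mul_one]
  have ha := fun i j => congrFun (congrFun hadj i) j
  have c00 := ha 0 0; have c11 := ha 1 1; have c22 := ha 2 2
  simp [Matrix.adjugate_fin_three] at c00 c11 c22
  simp [psi, dotProduct, Fin.sum_univ_three, Matrix.trace_fin_three, Matrix.sub_apply,
    Matrix.one_apply]
  linear_combination (h00 + h11 + h22)/4 + (c00 + c11 + c22)/2
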